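/- arXiv:1702.08857 — 3 statements merged into one kernel-verified Lean document; each statement's English description precedes it below -/
import Mathlib

section
/- Let N be the unique Lie algebra derivation of L_n with N(x_i) = x_i for all i (the Euler derivation), and let N_F : F_n → F_n be the induced linear map satisfying N_F⟨a,b⟩ = ⟨N a, b⟩ + ⟨a, N b⟩. Then N_F is bijective; moreover F_n is the sum of the eigenspaces ker(N_F − m·id) over integers m ≥ 2. -/
open TensorProduct

/-- The subspace of `L ⊗[k] L` spanned by the elements `a⊗b − b⊗a` and
`a⊗[b,c] − [a,b]⊗c`. -/
def Frel (k L : Type*) [Field k] [LieRing L] [LieAlgebra k L] :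
    Submodule k (L ⊗[k] L) :=
  Submodule.span k
    ({x | ∃ a b : L, x = a ⊗ₜ[k] b - b ⊗ₜ[k] a} ∪
     {x | ∃ a b c : L, x = a ⊗ₜ[k] ⁅b, c⁆ - ⁅a, b⁆ ⊗ₜ[k] c})

/-- `F(L)`, the quotient of `L ⊗[k] L` by the relations. -/
abbrev FF (k L : Type*) [Field k] [LieRing L] [LieAlgebra k L] :=
  (L ⊗[k] L) ⧸ Frel k L

/-- `⟨a, b⟩`, the class of `a ⊗ b` in `F(L)`. -/
noncomputable def pair {k L : Type*} [Field k] [LieRing L] [LieAlgebra k L] (a b : L) :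
    FF k L :=
  Submodule.Quotient.mk (a ⊗ₜ[k] b)

/-- `L_n`, the free Lie algebra on generators `x_1, …, x_n` (the generator `j : Fin n`
corresponds to `x_{j+1}`). -/
abbrev Ln (k : Type*) [Field k] (n : ℕ) := FreeLieAlgebra k (Fin n)

/-! A derivation sends a bracket, or a pairing, of eigenvectors of weights `μ` and `ν` to one
of weight `μ + ν`. The generators of `L_n` have weight `1` and generate it, so `L_n` is the
sum of the eigenspaces of `N` of weights `≥ 1`; as `F_n` is spanned by the pairs `⟨a, b⟩`,
it is the sum of the eigenspaces of `N_F` of weights `≥ 2`. These weights are nonzero in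
characteristic zero, so `N_F` is invertible on each eigenspace, and it has no kernel because
eigenspaces for distinct eigenvalues are independent. -/

open Module End

section EigenspaceBilinear

variable {R M N P : Type*} [CommRing R] [AddCommGroup M] [AddCommGroup N] [AddCommGroup P]
  [Module R M] [Module R N] [Module R P]
  {f : End R M} {g : End R N} {h : End R P} {B : M →ₗ[R] N →ₗ[R] P}

theorem apply_mem_eigenspace_add (hB : ∀ x y, h (B x y) = B (f x) y + B x (g y))
    {μ ν : R} {x : M} {y : N} (hx : x ∈ f.eigenspace μ) (hy : y ∈ g.eigenspace ν) :
    B x y ∈ h.eigenspace (μ + ν) := by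
  rw [mem_eigenspace_iff] at hx hy ⊢
  rw [hB, hx, hy, map_smul, LinearMap.smul_apply, LinearMap.map_smul, add_smul]

theorem Submodule.map₂_iSup_eigenspace_le (hB : ∀ x y, h (B x y) = B (f x) y + B x (g y))
    {S T U : Set R} (hSTU : ∀ μ ∈ S, ∀ ν ∈ T, μ + ν ∈ U) :
    Submodule.map₂ B (⨆ μ ∈ S, f.eigenspace μ) (⨆ ν ∈ T, g.eigenspace ν) ≤
      ⨆ ρ ∈ U, h.eigenspace ρ := by
  simp only [Submodule.map₂_iSup_left, Submodule.map₂_iSup_right, iSup_le_iff]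
  intro ν hν μ hμ
  refine Submodule.map₂_le.mpr fun x hx y hy => ?_
  exact Submodule.mem_iSup_of_mem (μ + ν) <| Submodule.mem_iSup_of_mem (hSTU μ hμ ν hν) <|
    apply_mem_eigenspace_add hB hx hy

end EigenspaceBilinear

theorem Module.End.bijective_of_iSup_eigenspace_eq_top {K V : Type*} [Field K] [AddCommGroup V]
    [Module K V] {f : End K V} {S : Set K} (hS : (0 : K) ∉ S)
    (hf : ⨆ μ ∈ S, f.eigenspace μ = ⊤) : Function.Bijective f := by
  constructor
  · have h0 := (eigenspaces_iSupIndep f).disjoint_biSup hS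
    rwa [hf, disjoint_top, eigenspace_zero, LinearMap.ker_eq_bot] at h0
  · rw [← LinearMap.range_eq_top, eq_top_iff, ← hf]
    refine iSup₂_le fun μ hμ x hx => ⟨μ⁻¹ • x, ?_⟩
    have hμ0 : μ ≠ 0 := fun h => hS (h ▸ hμ)
    rw [map_smul, mem_eigenspace_iff.mp hx, smul_smul, inv_mul_cancel₀ hμ0, one_smul]

theorem FreeLieAlgebra.lieSpan_range_of (R X : Type*) [CommRing R] :
    LieSubalgebra.lieSpan R (FreeLieAlgebra R X) (Set.range (of R)) = ⊤ := by
  set K := LieSubalgebra.lieSpan R (FreeLieAlgebra R X) (Set.range (of R))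
  have hid : K.incl.comp (lift R fun x => ⟨of R x, LieSubalgebra.subset_lieSpan ⟨x, rfl⟩⟩) =
      LieHom.id (R := R) := hom_ext fun x => by simp
  rw [eq_top_iff]
  intro y _
  rw [← LieHom.id_apply (R := R) y, ← hid]
  exact Subtype.prop _

theorem lie_mem_iSup_eigenspace {R L : Type*} [CommRing R] [LieRing L] [LieAlgebra R L]
    {N : End R L} (hN : ∀ a b, N ⁅a, b⁆ = ⁅N a, b⁆ + ⁅a, N b⁆)
    {S : Set R} (hS : ∀ μ ∈ S, ∀ ν ∈ S, μ + ν ∈ S) {x y : L}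
    (hx : x ∈ ⨆ μ ∈ S, N.eigenspace μ) (hy : y ∈ ⨆ μ ∈ S, N.eigenspace μ) :
    ⁅x, y⁆ ∈ ⨆ μ ∈ S, N.eigenspace μ :=
  Submodule.map₂_iSup_eigenspace_le (B := (LieModule.toEnd R L L : L →ₗ[R] End R L)) hN hS
    (Submodule.apply_mem_map₂ _ hx hy)

theorem FreeLieAlgebra.iSup_eigenspace_eq_top {R X : Type*} [CommRing R]
    {N : End R (FreeLieAlgebra R X)} (hN : ∀ a b, N ⁅a, b⁆ = ⁅N a, b⁆ + ⁅a, N b⁆)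
    {S : Set R} (hS : ∀ μ ∈ S, ∀ ν ∈ S, μ + ν ∈ S)
    (hof : ∀ x, ∃ μ ∈ S, of R x ∈ N.eigenspace μ) :
    ⨆ μ ∈ S, N.eigenspace μ = ⊤ := by
  let E : LieSubalgebra R (FreeLieAlgebra R X) :=
    { toSubmodule := ⨆ μ ∈ S, N.eigenspace μ
      lie_mem' := lie_mem_iSup_eigenspace hN hS }
  have hE : E = ⊤ := by
    rw [eq_top_iff, ← lieSpan_range_of, LieSubalgebra.lieSpan_le]
    rintro _ ⟨x, rfl⟩
    obtain ⟨μ, hμ, hx⟩ := hof x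
    exact Submodule.mem_iSup_of_mem μ (Submodule.mem_iSup_of_mem hμ hx)
  exact congrArg LieSubalgebra.toSubmodule hE

section PairingSpace

variable {k L : Type*} [Field k] [LieRing L] [LieAlgebra k L]

noncomputable def pairBilin : L →ₗ[k] L →ₗ[k] FF k L :=
  (TensorProduct.mk k L L).compr₂ (Frel k L).mkQ

theorem map₂_pairBilin_top : Submodule.map₂ (pairBilin (k := k) (L := L)) ⊤ ⊤ = ⊤ := by
  rw [pairBilin, ← Submodule.map_map₂, TensorProduct.map₂_mk_top_top_eq_top, Submodule.map_top,
    Submodule.range_mkQ]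

theorem iSup_eigenspace_FF_eq_top {N : End k L} {NF : End k (FF k L)}
    (hNF : ∀ a b : L, NF (pair a b) = pair (N a) b + pair a (N b))
    {S U : Set k} (hSU : ∀ μ ∈ S, ∀ ν ∈ S, μ + ν ∈ U) (hL : ⨆ μ ∈ S, N.eigenspace μ = ⊤) :
    ⨆ μ ∈ U, NF.eigenspace μ = ⊤ := by
  rw [eq_top_iff, ← map₂_pairBilin_top, ← hL]
  exact Submodule.map₂_iSup_eigenspace_le hNF hSU

end PairingSpace

theorem Nat.cast_add_mem_image_Ici {R : Type*} [AddMonoidWithOne R] {p q : ℕ} {μ ν : R}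
    (hμ : μ ∈ (Nat.cast '' Set.Ici p : Set R)) (hν : ν ∈ (Nat.cast '' Set.Ici q : Set R)) :
    μ + ν ∈ (Nat.cast '' Set.Ici (p + q) : Set R) := by
  obtain ⟨a, ha, rfl⟩ := hμ
  obtain ⟨b, hb, rfl⟩ := hν
  exact ⟨a + b, add_le_add ha hb, Nat.cast_add a b⟩

/-- the Euler derivation `N` of `L_n` (the derivation with `N x_i = x_i`)
induces a linear map `N_F : F_n → F_n` with `N_F⟨a,b⟩ = ⟨N a, b⟩ + ⟨a, N b⟩`; this map
is bijective, and `F_n` is the sum of the eigenspaces `ker (N_F − m·id)` over integers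
`m ≥ 2`. -/
theorem statement_3 (k : Type*) [Field k] [CharZero k] (n : ℕ)
    (N : Ln k n →ₗ[k] Ln k n)
    (hder : ∀ a b : Ln k n, N ⁅a, b⁆ = ⁅N a, b⁆ + ⁅a, N b⁆)
    (hgen : ∀ i : Fin n, N (FreeLieAlgebra.of k i) = FreeLieAlgebra.of k i)
    (NF : FF k (Ln k n) →ₗ[k] FF k (Ln k n))
    (hNF : ∀ a b : Ln k n, NF (pair a b) = pair (N a) b + pair a (N b)) :
    Function.Bijective NF ∧
    (⨆ m : ℕ, ⨆ _ : 2 ≤ m,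
        LinearMap.ker (NF - (m : k) • (LinearMap.id : FF k (Ln k n) →ₗ[k] FF k (Ln k n))))
      = ⊤ := by
  have hL : ⨆ μ ∈ (Nat.cast '' Set.Ici 1 : Set k), eigenspace N μ = ⊤ :=
    FreeLieAlgebra.iSup_eigenspace_eq_top hder
      (fun μ hμ ν hν => Set.image_mono (Set.Ici_subset_Ici.mpr (by norm_num))
        (Nat.cast_add_mem_image_Ici hμ hν))
      fun i => ⟨1, ⟨1, Set.self_mem_Ici, Nat.cast_one⟩,
        mem_eigenspace_iff.mpr (by rw [hgen, one_smul])⟩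
  have hF : ⨆ μ ∈ (Nat.cast '' Set.Ici 2 : Set k), eigenspace NF μ = ⊤ :=
    iSup_eigenspace_FF_eq_top hNF (fun μ hμ ν hν => Nat.cast_add_mem_image_Ici hμ hν) hL
  refine ⟨bijective_of_iSup_eigenspace_eq_top (by simp) hF, ?_⟩
  rw [← hF, iSup_image]
  simp only [eigenspace_def, one_eq_id, Set.mem_Ici]
end

section
/- Every element α ∈ F_n which is multilinear and alternating (i.e. α ∈ H_n) satisfies δα = 0 in F_{n+1}. -/
open TensorProduct

theorem Frel_map_le {k L L' : Type*} [Field k] [LieRing L] [LieAlgebra k L]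
    [LieRing L'] [LieAlgebra k L'] (f : L →ₗ⁅k⁆ L') :
    (Frel k L).map (TensorProduct.map f.toLinearMap f.toLinearMap) ≤ Frel k L' := by
  rw [Frel, Submodule.map_span, Submodule.span_le]
  rintro _ ⟨x, hx, rfl⟩
  apply Submodule.subset_span
  rcases hx with ⟨a, b, rfl⟩ | ⟨a, b, c, rfl⟩
  · exact Or.inl ⟨f a, f b, by simp⟩
  · exact Or.inr ⟨f a, f b, f c, by simp⟩

/-- The linear map `F(f) : F(L) → F(L')` induced by a Lie algebra homomorphism `f`;
it satisfies `F(f)⟨a,b⟩ = ⟨f a, f b⟩`. -/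
noncomputable def Fmap {k L L' : Type*} [Field k] [LieRing L] [LieAlgebra k L]
    [LieRing L'] [LieAlgebra k L'] (f : L →ₗ⁅k⁆ L') : FF k L →ₗ[k] FF k L' :=
  Submodule.mapQ (Frel k L) (Frel k L') (TensorProduct.map f.toLinearMap f.toLinearMap)
    (Submodule.map_le_iff_le_comap.mp (Frel_map_le f))

theorem Fmap_pair {k L L' : Type*} [Field k] [LieRing L] [LieAlgebra k L]
    [LieRing L'] [LieAlgebra k L'] (f : L →ₗ⁅k⁆ L') (a b : L) :
    Fmap f (pair a b) = pair (f a) (f b) := by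
  simp [Fmap, pair, Submodule.mapQ_apply]

/-- The value of the coface map `δ_i : L_n → L_{n+1}` on the generator `x_{j+1}`:
`x_m ↦ x_m` for `m < i`, `x_i ↦ x_i + x_{i+1}`, and `x_m ↦ x_{m+1}` for `m > i`
(with `m = j+1`, 1-based indexing). -/
noncomputable def cofaceGen (k : Type*) [Field k] (n : ℕ) (i : Fin (n + 2)) (j : Fin n) :
    Ln k (n + 1) :=
  if (j : ℕ) + 1 < (i : ℕ) then FreeLieAlgebra.of k j.castSucc
  else if (j : ℕ) + 1 = (i : ℕ) then
    FreeLieAlgebra.of k j.castSucc + FreeLieAlgebra.of k j.succ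
  else FreeLieAlgebra.of k j.succ

/-- The coface map `δ_i : L_n → L_{n+1}` as a Lie algebra homomorphism. -/
noncomputable def coface (k : Type*) [Field k] (n : ℕ) (i : Fin (n + 2)) :
    Ln k n →ₗ⁅k⁆ Ln k (n + 1) :=
  FreeLieAlgebra.lift k (cofaceGen k n i)

/-- The cosimplicial differential `δ = Σ_{i=0}^{n+1} (−1)^i F(δ_i) : F_n → F_{n+1}`. -/
noncomputable def cosimp (k : Type*) [Field k] (n : ℕ) :
    FF k (Ln k n) →ₗ[k] FF k (Ln k (n + 1)) :=
  ∑ i : Fin (n + 2), ((-1 : k) ^ (i : ℕ)) • Fmap (coface k n i)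

/-- The Lie algebra endomorphism of `L_n` rescaling the generator `x_{i+1}` by `t`
and fixing the other generators. -/
noncomputable def scaleHom (k : Type*) [Field k] (n : ℕ) (i : Fin n) (t : k) :
    Ln k n →ₗ⁅k⁆ Ln k n :=
  FreeLieAlgebra.lift k
    (fun j => if j = i then t • FreeLieAlgebra.of k j else FreeLieAlgebra.of k j)

/-- The Lie algebra endomorphism of `L_n` induced by a permutation of the generators,
`x_i ↦ x_{π(i)}`. -/
noncomputable def permHom (k : Type*) [Field k] (n : ℕ) (π : Equiv.Perm (Fin n)) :
    Ln k n →ₗ⁅k⁆ Ln k n :=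
  FreeLieAlgebra.lift k (fun j => FreeLieAlgebra.of k (π j))

/-- `H_n ⊆ F_n`: the subspace of elements that are multilinear (rescaling `x_i` by `t`
multiplies the element by `t`) and alternating (a permutation `π` of the generators
multiplies the element by `sign π`). -/
noncomputable def Hsub (k : Type*) [Field k] (n : ℕ) : Submodule k (FF k (Ln k n)) :=
  (⨅ i : Fin n, ⨅ t : k,
      LinearMap.ker (Fmap (scaleHom k n i t)
        - t • (LinearMap.id : FF k (Ln k n) →ₗ[k] FF k (Ln k n)))) ⊓
  (⨅ π : Equiv.Perm (Fin n),
      LinearMap.ker (Fmap (permHom k n π)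
        - ((Equiv.Perm.sign π : ℤ) : k)
            • (LinearMap.id : FF k (Ln k n) →ₗ[k] FF k (Ln k n))))

/-!
For `1 ≤ i ≤ n` put `ψ_{s,t} : L_n → L_{n+1}`, `x_i ↦ s x_i + t x_{i+1}`, otherwise as `δ_i`, so
that `ψ_{1,1} = δ_i` while `ψ_{1,0}` and `ψ_{0,1}` are the inclusions `ε_{i+1}`, `ε_i` omitting
one generator. The family lifts to a Lie map into `k[s,t] ⊗ L_{n+1}`, so for every functional `ℓ`
on `F_{n+1}` the function `(s,t) ↦ ℓ (F(ψ_{s,t}) α)` is a polynomial; multilinearity of `α` in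
`x_i` makes it homogeneous of degree one, hence linear, and `F(δ_i) α = F(ε_i) α + F(ε_{i+1}) α`.
As `δ_0 = ε_1` and `δ_{n+1} = ε_{n+1}`, this holds for all `i` once `ε_0 = ε_{n+2} := 0`, and the
alternating sum `δ α` telescopes to zero.
-/

namespace MvPolynomial

variable {k σ : Type*} [Field k]

theorem coeff_bind₁_C_mul_X (c : k) (P : MvPolynomial σ k) (m : σ →₀ ℕ) :
    coeff m (bind₁ (fun i => C c * X i) P) = c ^ m.degree * coeff m P := by
  classical
  induction P using induction_on' with
  | monomial d r =>
    have : bind₁ (fun i => C c * X i) (monomial d r) = monomial d (c ^ d.degree * r) := by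
      rw [bind₁_monomial, monomial_eq, Finsupp.prod]
      simp only [mul_pow, Finset.prod_mul_distrib, ← map_pow, ← map_prod,
        Finset.prod_pow_eq_pow_sum, map_mul, Finsupp.degree_apply]
      ring
    rw [this, coeff_monomial, coeff_monomial]
    split_ifs with h <;> simp [h]
  | add p q hp hq => simp only [map_add, coeff_add, hp, hq, mul_add]

theorem isHomogeneous_one_of_aeval_two_smul [CharZero k] {P : MvPolynomial σ k}
    (hP : ∀ x : σ → k, aeval ((2 : k) • x) P = 2 * aeval x P) : P.IsHomogeneous 1 := by
  have hQ : bind₁ (fun i => C 2 * X i) P = C 2 * P := funext fun x => by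
    change aeval x _ = aeval x _
    rw [aeval_bind₁, map_mul, aeval_C, Algebra.algebraMap_self, RingHom.id_apply, ← hP]
    congr 1
    ext i
    simp
  -- comparing coefficients, `2 ^ m.degree = 2` wherever `P` has a nonzero coefficient
  intro m hm
  have h := coeff_bind₁_C_mul_X (2 : k) P m
  rw [hQ, coeff_C_mul] at h
  have : (2 : k) ^ m.degree = 2 ^ 1 := by rw [pow_one]; exact (mul_right_cancel₀ hm h).symm
  have h1 : m.degree = 1 := Nat.pow_right_injective le_rfl (by exact_mod_cast this)
  rwa [Pi.one_def, ← Finsupp.degree_eq_weight_one]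

theorem aeval_add_of_isHomogeneous_one {P : MvPolynomial σ k} (hP : P.IsHomogeneous 1)
    (x y : σ → k) : aeval (x + y) P = aeval x P + aeval y P := by
  rw [← mem_homogeneousSubmodule, homogeneousSubmodule_one_eq_span_X] at hP
  induction hP using Submodule.span_induction with
  | mem _ h => obtain ⟨i, rfl⟩ := h; simp
  | zero => simp
  | add _ _ _ _ h₁ h₂ => simp only [map_add, h₁, h₂]; ring
  | smul _ _ _ h => simp only [map_smul, h, smul_add]

end MvPolynomial

open MvPolynomial

section PolynomialFamily

variable {k σ : Type*} [Field k]

noncomputable def evalLie (L : Type*) [LieRing L] [LieAlgebra k L] (x : σ → k) :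
    MvPolynomial σ k ⊗[k] L →ₗ⁅k⁆ L :=
  { TensorProduct.lift ((LinearMap.lsmul k L).comp (aeval x).toLinearMap) with
    map_lie' := by
      intro X Y
      refine X.induction_on (by simp) (fun p u => ?_) (fun _ _ h₁ h₂ => by simp_all [add_lie])
      refine Y.induction_on (by simp) (fun q v => ?_) (fun _ _ h₁ h₂ => by simp_all [lie_add])
      simp [smul_lie, lie_smul, smul_smul, mul_comm] }

variable {L L' : Type*} [LieRing L] [LieAlgebra k L] [LieRing L'] [LieAlgebra k L']

@[simp]
theorem evalLie_tmul (x : σ → k) (p : MvPolynomial σ k) (u : L) :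
    evalLie L x (p ⊗ₜ[k] u) = aeval x p • u :=
  rfl

theorem Fmap_comp {L'' : Type*} [LieRing L''] [LieAlgebra k L''] (f : L' →ₗ⁅k⁆ L'')
    (g : L →ₗ⁅k⁆ L') : Fmap (f.comp g) = (Fmap f).comp (Fmap g) := by
  apply Submodule.linearMap_qext
  apply TensorProduct.ext'
  intro a b
  simp [Fmap, Submodule.mapQ_apply]

@[simp]
theorem pair_add_left (a a' b : L) : pair (a + a') b = (pair a b : FF k L) + pair a' b := by
  simp [pair, TensorProduct.add_tmul]

@[simp]
theorem pair_add_right (a b b' : L) : pair a (b + b') = (pair a b : FF k L) + pair a b' := by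
  simp [pair, TensorProduct.tmul_add]

@[simp]
theorem pair_smul_left (c : k) (a b : L) : pair (c • a) b = c • (pair a b : FF k L) := by
  rw [pair, ← TensorProduct.smul_tmul', Submodule.Quotient.mk_smul, pair]

@[simp]
theorem pair_smul_right (c : k) (a b : L) : pair a (c • b) = c • (pair a b : FF k L) := by
  simp [pair, TensorProduct.tmul_smul]

theorem exists_aeval_eq_pair_evalLie (ℓ : Module.Dual k (FF k L))
    (X Y : MvPolynomial σ k ⊗[k] L) :
    ∃ P : MvPolynomial σ k, ∀ x : σ → k,
      ℓ (pair (evalLie L x X) (evalLie L x Y)) = aeval x P := by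
  induction X using TensorProduct.induction_on with
  | zero => exact ⟨0, by simp [pair]⟩
  | add X₁ X₂ h₁ h₂ =>
    obtain ⟨P₁, hP₁⟩ := h₁
    obtain ⟨P₂, hP₂⟩ := h₂
    exact ⟨P₁ + P₂, fun x => by simp only [map_add, pair_add_left, hP₁, hP₂]⟩
  | tmul p u =>
    induction Y using TensorProduct.induction_on with
    | zero => exact ⟨0, by simp [pair]⟩
    | add Y₁ Y₂ h₁ h₂ =>
      obtain ⟨P₁, hP₁⟩ := h₁
      obtain ⟨P₂, hP₂⟩ := h₂
      exact ⟨P₁ + P₂, fun x => by simp only [map_add, pair_add_right, hP₁, hP₂]⟩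
    | tmul q v =>
      refine ⟨p * q * C (ℓ (pair u v)), fun x => ?_⟩
      simp only [evalLie_tmul, pair_smul_left, pair_smul_right, map_smul, map_mul, aeval_C,
        Algebra.algebraMap_self, RingHom.id_apply, smul_eq_mul]
      ring

theorem exists_aeval_eq_Fmap_evalLie_comp (Ψ : L →ₗ⁅k⁆ MvPolynomial σ k ⊗[k] L')
    (ℓ : Module.Dual k (FF k L')) (α : FF k L) :
    ∃ P : MvPolynomial σ k, ∀ x : σ → k, ℓ (Fmap ((evalLie L' x).comp Ψ) α) = aeval x P := by
  obtain ⟨z, rfl⟩ := Submodule.Quotient.mk_surjective _ α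
  induction z using TensorProduct.induction_on with
  | zero => exact ⟨0, by simp⟩
  | add z₁ z₂ h₁ h₂ =>
    obtain ⟨P₁, hP₁⟩ := h₁
    obtain ⟨P₂, hP₂⟩ := h₂
    exact ⟨P₁ + P₂, fun x => by simp only [Submodule.Quotient.mk_add, map_add, hP₁, hP₂]⟩
  | tmul a b =>
    obtain ⟨P, hP⟩ := exists_aeval_eq_pair_evalLie ℓ (Ψ a) (Ψ b)
    exact ⟨P, fun x => (congrArg ℓ (Fmap_pair _ a b)).trans (hP x)⟩

theorem Fmap_evalLie_comp_add [CharZero k] (Ψ : L →ₗ⁅k⁆ MvPolynomial σ k ⊗[k] L')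
    (θ : L →ₗ⁅k⁆ L) (hθ : ∀ x, (evalLie L' ((2 : k) • x)).comp Ψ = ((evalLie L' x).comp Ψ).comp θ)
    {α : FF k L} (hα : Fmap θ α = (2 : k) • α) (x y : σ → k) :
    Fmap ((evalLie L' (x + y)).comp Ψ) α
      = Fmap ((evalLie L' x).comp Ψ) α + Fmap ((evalLie L' y).comp Ψ) α := by
  rw [← sub_eq_zero, ← Module.forall_dual_apply_eq_zero_iff k]
  intro ℓ
  obtain ⟨P, hP⟩ := exists_aeval_eq_Fmap_evalLie_comp Ψ ℓ α
  have hhom : P.IsHomogeneous 1 := isHomogeneous_one_of_aeval_two_smul fun x => by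
    rw [← hP, ← hP, hθ, Fmap_comp, LinearMap.comp_apply, hα, LinearMap.map_smul,
      LinearMap.map_smul, smul_eq_mul]
  rw [map_sub, map_add, hP, hP, hP, aeval_add_of_isHomogeneous_one hhom, sub_self]

end PolynomialFamily

section Cofaces

variable (k : Type*) [Field k] (n : ℕ)

/-- The inclusion omitting the generator `x_p`, indexed from `1` as in `cofaceGen`. -/
noncomputable def skipHom (p : ℕ) : Ln k n →ₗ⁅k⁆ Ln k (n + 1) :=
  FreeLieAlgebra.lift k fun j =>
    if (j : ℕ) + 1 < p then FreeLieAlgebra.of k j.castSucc else FreeLieAlgebra.of k j.succ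

/-- `x_{ι+1} ↦ X₀ x_{ι+1} + X₁ x_{ι+2}`; at `X = (1, 1)` this is the coface `δ_{ι+1}`. -/
noncomputable def cofaceFamily (ι : Fin n) :
    Ln k n →ₗ⁅k⁆ MvPolynomial (Fin 2) k ⊗[k] Ln k (n + 1) :=
  FreeLieAlgebra.lift k fun j =>
    if j < ι then 1 ⊗ₜ FreeLieAlgebra.of k j.castSucc
    else if j = ι then
      X 0 ⊗ₜ FreeLieAlgebra.of k j.castSucc + X 1 ⊗ₜ FreeLieAlgebra.of k j.succ
    else 1 ⊗ₜ FreeLieAlgebra.of k j.succ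

variable {k n}

theorem evalLie_cofaceFamily_of (ι : Fin n) (x : Fin 2 → k) (j : Fin n) :
    evalLie _ x (cofaceFamily k n ι (FreeLieAlgebra.of k j)) =
      if j < ι then FreeLieAlgebra.of k j.castSucc
      else if j = ι then
        x 0 • FreeLieAlgebra.of k j.castSucc + x 1 • FreeLieAlgebra.of k j.succ
      else FreeLieAlgebra.of k j.succ := by
  rw [cofaceFamily, FreeLieAlgebra.lift_of_apply]
  split_ifs <;> simp

theorem evalLie_one_comp_cofaceFamily (ι : Fin n) :
    (evalLie _ 1).comp (cofaceFamily k n ι) = coface k n ι.succ.castSucc := by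
  refine FreeLieAlgebra.hom_ext fun j => ?_
  rw [LieHom.comp_apply, evalLie_cofaceFamily_of, coface, FreeLieAlgebra.lift_of_apply, cofaceGen]
  simp only [Fin.val_castSucc, Fin.val_succ, add_lt_add_iff_right, add_left_inj, Fin.lt_def,
    Fin.ext_iff, Pi.one_apply, one_smul]

theorem evalLie_single_zero_comp_cofaceFamily (ι : Fin n) :
    (evalLie _ (Pi.single 0 1)).comp (cofaceFamily k n ι) = skipHom k n (ι + 2) := by
  refine FreeLieAlgebra.hom_ext fun j => ?_
  rw [LieHom.comp_apply, evalLie_cofaceFamily_of, skipHom, FreeLieAlgebra.lift_of_apply]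
  rcases lt_trichotomy j ι with h | rfl | h
  · simp [h, show (j : ℕ) + 1 < ι + 2 by omega]
  · simp
  · simp [h.asymm, h.ne', show ¬ (j : ℕ) + 1 < ι + 2 by omega]

theorem evalLie_single_one_comp_cofaceFamily (ι : Fin n) :
    (evalLie _ (Pi.single 1 1)).comp (cofaceFamily k n ι) = skipHom k n (ι + 1) := by
  refine FreeLieAlgebra.hom_ext fun j => ?_
  rw [LieHom.comp_apply, evalLie_cofaceFamily_of, skipHom, FreeLieAlgebra.lift_of_apply]
  rcases lt_trichotomy j ι with h | rfl | h
  · simp [h]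
  · simp
  · simp [h.asymm, h.ne', show ¬ (j : ℕ) + 1 < ι + 1 by omega]

theorem evalLie_two_smul_comp_cofaceFamily (ι : Fin n) (x : Fin 2 → k) :
    (evalLie _ ((2 : k) • x)).comp (cofaceFamily k n ι)
      = ((evalLie _ x).comp (cofaceFamily k n ι)).comp (scaleHom k n ι 2) := by
  refine FreeLieAlgebra.hom_ext fun j => ?_
  rw [LieHom.comp_apply, LieHom.comp_apply, LieHom.comp_apply, scaleHom,
    FreeLieAlgebra.lift_of_apply]
  split_ifs with h
  · subst h
    simp [evalLie_cofaceFamily_of, smul_add, smul_smul]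
  · simp [evalLie_cofaceFamily_of, h]

theorem Fmap_coface_castSucc_succ [CharZero k] {α : FF k (Ln k n)} (ι : Fin n)
    (hα : ∀ t : k, Fmap (scaleHom k n ι t) α = t • α) :
    Fmap (coface k n ι.succ.castSucc) α
      = Fmap (skipHom k n (ι + 1)) α + Fmap (skipHom k n (ι + 2)) α := by
  have hsplit : (1 : Fin 2 → k) = Pi.single 1 1 + Pi.single 0 1 := by
    ext i; fin_cases i <;> simp
  rw [← evalLie_one_comp_cofaceFamily, hsplit, ← evalLie_single_one_comp_cofaceFamily,
    ← evalLie_single_zero_comp_cofaceFamily]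
  exact Fmap_evalLie_comp_add _ _ (evalLie_two_smul_comp_cofaceFamily ι) (hα 2) _ _

theorem coface_zero : coface k n 0 = skipHom k n 1 := by
  refine FreeLieAlgebra.hom_ext fun j => ?_
  simp [coface, skipHom, cofaceGen]

theorem coface_last : coface k n (Fin.last (n + 1)) = skipHom k n (n + 1) := by
  refine FreeLieAlgebra.hom_ext fun j => ?_
  simp [coface, skipHom, cofaceGen]

end Cofaces

theorem Finset.sum_range_neg_one_pow_smul_add {R M : Type*} [Ring R] [AddCommGroup M]
    [Module R M] (f : ℕ → M) (m : ℕ) :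
    ∑ i ∈ Finset.range m, (-1 : R) ^ i • (f i + f (i + 1)) = f 0 - (-1 : R) ^ m • f m := by
  induction m with
  | zero => simp
  | succ m ih =>
    rw [Finset.sum_range_succ, ih, pow_succ, mul_neg_one, neg_smul, smul_add]
    abel

theorem Fmap_scaleHom_of_mem_Hsub {k : Type*} [Field k] {n : ℕ} {α : FF k (Ln k n)}
    (hα : α ∈ Hsub k n) (i : Fin n) (t : k) : Fmap (scaleHom k n i t) α = t • α := by
  have h := (Submodule.mem_inf.mp hα).1
  simp only [Submodule.mem_iInf, LinearMap.mem_ker, LinearMap.sub_apply, LinearMap.smul_apply,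
    LinearMap.id_apply, sub_eq_zero] at h
  exact h i t

/-- every multilinear alternating element `α ∈ H_n ⊆ F_n` satisfies
`δ α = 0` in `F_{n+1}`. -/
theorem statement_5 (k : Type*) [Field k] [CharZero k] (n : ℕ)
    (α : FF k (Ln k n)) (hα : α ∈ Hsub k n) :
    cosimp k n α = 0 := by
  let f : ℕ → FF k (Ln k (n + 1)) := fun p =>
    if p = 0 ∨ p = n + 2 then 0 else Fmap (skipHom k n p) α
  have hδ : ∀ i : Fin (n + 2), Fmap (coface k n i) α = f i + f (i + 1) := by
    intro i
    induction i using Fin.lastCases with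
    | last => simp [f, coface_last]
    | cast i =>
      induction i using Fin.cases with
      | zero => simp [f, coface_zero]
      | succ ι =>
        rw [Fmap_coface_castSucc_succ ι (Fmap_scaleHom_of_mem_Hsub hα ι)]
        simp only [f, Fin.val_castSucc, Fin.val_succ]
        rw [if_neg (by omega), if_neg (by omega)]
  calc cosimp k n α = ∑ i ∈ Finset.range (n + 2), (-1 : k) ^ i • (f i + f (i + 1)) := by
        simp only [cosimp, LinearMap.sum_apply, LinearMap.smul_apply, hδ]
        exact Fin.sum_univ_eq_sum_range (fun i => (-1 : k) ^ i • (f i + f (i + 1))) _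
    _ = 0 := by rw [Finset.sum_range_neg_one_pow_smul_add]; simp [f]
end

section
/- The space F_2 is infinite-dimensional as a k-vector space. -/
/-!
Every invariant symmetric bilinear form on `L` factors through `F(L)`, and the trace form
`(a, b) ↦ tr (ρ a * ρ b)` of a representation `ρ` of `L` by matrices over a commutative
`k`-algebra is one. Sending `x₁ ↦ e` and `x₂ ↦ X • f` represents `L₂` in the loop algebra
`sl₂(k[X])`; iterating `½ ad(x₂) ad(x₁)` on `x₂` gives elements `w_m ↦ X ^ (m + 1) • f`, so the
trace form sends `⟨x₁, w_m⟩` to `X ^ (m + 1)`. These are linearly independent, hence so are the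
`⟨x₁, w_m⟩`.
-/

open TensorProduct

open Polynomial

section

attribute [local instance 100] LieRing.ofAssociativeRing

section TraceForm

variable {k L A n : Type*} [Field k] [LieRing L] [LieAlgebra k L] [CommRing A] [Algebra k A]
  [Fintype n] [DecidableEq n]

noncomputable def traceFormTensor (ρ : L →ₗ⁅k⁆ Matrix n n A) : L ⊗[k] L →ₗ[k] A :=
  TensorProduct.lift <|
    ((LinearMap.mul k (Matrix n n A)).compr₂
      ((Matrix.traceLinearMap n A A).restrictScalars k)).compl₁₂ ρ.toLinearMap ρ.toLinearMap

lemma traceFormTensor_tmul (ρ : L →ₗ⁅k⁆ Matrix n n A) (a b : L) :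
    traceFormTensor ρ (a ⊗ₜ b) = (ρ a * ρ b).trace := rfl

lemma frel_le_ker_traceFormTensor (ρ : L →ₗ⁅k⁆ Matrix n n A) :
    Frel k L ≤ LinearMap.ker (traceFormTensor ρ) := by
  rw [Frel, Submodule.span_le]
  rintro x (⟨a, b, rfl⟩ | ⟨a, b, c, rfl⟩) <;>
    simp only [SetLike.mem_coe, LinearMap.mem_ker, map_sub, traceFormTensor_tmul,
      LieHom.map_lie, Ring.lie_def, mul_sub, sub_mul, Matrix.trace_sub, sub_eq_zero]
  · exact Matrix.trace_mul_comm _ _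
  · rw [← Matrix.mul_assoc, ← Matrix.mul_assoc, Matrix.trace_mul_comm (ρ a * ρ c),
      Matrix.mul_assoc (ρ b)]

noncomputable def traceForm (ρ : L →ₗ⁅k⁆ Matrix n n A) : FF k L →ₗ[k] A :=
  (Frel k L).liftQ (traceFormTensor ρ) (frel_le_ker_traceFormTensor ρ)

lemma traceForm_pair (ρ : L →ₗ⁅k⁆ Matrix n n A) (a b : L) :
    traceForm ρ (pair a b) = (ρ a * ρ b).trace := rfl

end TraceForm

lemma linearIndependent_X_pow_succ (k : Type*) [Field k] :
    LinearIndependent k fun m : ℕ => (X : k[X]) ^ (m + 1) := by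
  simpa only [Function.comp_def, Nat.succ_eq_add_one, coe_basisMonomials,
    X_pow_eq_monomial] using
    (basisMonomials k).linearIndependent.comp Nat.succ Nat.succ_injective

section LoopRepresentation

section Sl2

variable {R : Type*} [CommRing R]

variable (R) in
def upperUnit : Matrix (Fin 2) (Fin 2) R := !![0, 1; 0, 0]

def lowerEntry (p : R) : Matrix (Fin 2) (Fin 2) R := !![0, 0; p, 0]

lemma lie_lowerEntry_lie_upperUnit (p q : R) :
    ⁅lowerEntry p, ⁅upperUnit R, lowerEntry q⁆⁆ = lowerEntry (2 * p * q) := by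
  ext i j
  fin_cases i <;> fin_cases j <;>
    simp [upperUnit, lowerEntry, Ring.lie_def]
  ring

lemma smul_lowerEntry {S : Type*} [SMulZeroClass S R] (c : S) (p : R) :
    c • lowerEntry p = lowerEntry (c • p) := by
  ext i j
  fin_cases i <;> fin_cases j <;> simp [lowerEntry]

end Sl2

variable (k : Type*) [Field k]

noncomputable def loopRep : Ln k 2 →ₗ⁅k⁆ Matrix (Fin 2) (Fin 2) k[X] :=
  FreeLieAlgebra.lift k ![upperUnit k[X], lowerEntry X]

noncomputable def ladder : ℕ → Ln k 2
  | 0 => FreeLieAlgebra.of k (1 : Fin 2)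
  | m + 1 =>
    (2⁻¹ : k) • ⁅FreeLieAlgebra.of k (1 : Fin 2), ⁅FreeLieAlgebra.of k (0 : Fin 2), ladder m⁆⁆

variable {k}

lemma loopRep_of (i : Fin 2) :
    loopRep k (FreeLieAlgebra.of k i) = ![upperUnit k[X], lowerEntry X] i :=
  FreeLieAlgebra.lift_of_apply _ _

lemma loopRep_ladder (h2 : (2 : k) ≠ 0) (m : ℕ) :
    loopRep k (ladder k m) = lowerEntry (X ^ (m + 1)) := by
  induction m with
  | zero => simp [ladder, loopRep_of]
  | succ m ih =>
    rw [ladder, map_smul, LieHom.map_lie, LieHom.map_lie, ih, loopRep_of, loopRep_of]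
    simp only [Matrix.cons_val_zero, Matrix.cons_val_one, lie_lowerEntry_lie_upperUnit,
      smul_lowerEntry]
    rw [mul_assoc, ← pow_succ', smul_eq_C_mul, ← mul_assoc, ← C_ofNat, ← C_mul,
      inv_mul_cancel₀ h2, C_1, one_mul]

lemma traceForm_pair_of_zero_ladder (h2 : (2 : k) ≠ 0) (m : ℕ) :
    traceForm (loopRep k) (pair (FreeLieAlgebra.of k (0 : Fin 2)) (ladder k m)) =
      X ^ (m + 1) := by
  simp [traceForm_pair, loopRep_of, loopRep_ladder h2, upperUnit, lowerEntry,
    Matrix.trace_fin_two]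

end LoopRepresentation

end

/-- `F_2` is infinite-dimensional as a `k`-vector space. -/
theorem statement_14 (k : Type*) [Field k] [CharZero k] :
    ¬ FiniteDimensional k (FF k (Ln k 2)) := by
  intro _
  have hindep :
      LinearIndependent k fun m => pair (FreeLieAlgebra.of k (0 : Fin 2)) (ladder k m) :=
    .of_comp (traceForm (loopRep k)) <| by
      simpa only [Function.comp_def, traceForm_pair_of_zero_ladder two_ne_zero] using
        linearIndependent_X_pow_succ k
  exact Module.Finite.not_linearIndependent_of_infinite _ hindep
end
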